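/- arXiv:2206.02296 — 2 statements merged into one kernel-verified Lean document; each statement's English description precedes it below -/
import Mathlib

section
/- (Continuous version of Tsiatis's Lemma 10.4) Let M_c(t) = N_c(t) − ∫_0^t Y(u) λ_c(u) du, where N_c(t) = I(X ≤ t, T > C), Y(u) = I(X ≥ u), X = min(T,C), and S_c(u) = exp(−∫_0^u λ_c(v) dv). Then pathwise, ∫_0^t dM_c(u)/S_c(u) = 1 − Y(t)/S_c(t) − N(t−)/S_c(X), where N(t−) = I(X < t, T ≤ C). -/
open scoped Classical ENNReal
open MeasureTheory intervalIntegral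

lemma tsiatis_aux (lamc : ℝ → ℝ) (hcont : Continuous lamc) (a : ℝ) :
    ∫ u in (0:ℝ)..a, lamc u * Real.exp (∫ v in (0:ℝ)..u, lamc v)
      = Real.exp (∫ v in (0:ℝ)..a, lamc v) - 1 := by
  have hF : ∀ u : ℝ, HasDerivAt (fun x => ∫ v in (0:ℝ)..x, lamc v) (lamc u) u := fun u =>
    intervalIntegral.integral_hasDerivAt_right (hcont.intervalIntegrable _ _)
      (hcont.stronglyMeasurableAtFilter _ _) hcont.continuousAt
  have hFc : Continuous (fun x => ∫ v in (0:ℝ)..x, lamc v) :=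
    continuous_iff_continuousAt.2 fun u => (hF u).continuousAt
  have hg : ∀ u : ℝ, HasDerivAt (fun x => Real.exp (∫ v in (0:ℝ)..x, lamc v))
      (lamc u * Real.exp (∫ v in (0:ℝ)..u, lamc v)) u := by
    intro u
    simpa [mul_comm] using (hF u).exp
  have hint : IntervalIntegrable
      (fun u => lamc u * Real.exp (∫ v in (0:ℝ)..u, lamc v)) volume 0 a :=
    (hcont.mul (Real.continuous_exp.comp hFc)).intervalIntegrable _ _
  have := intervalIntegral.integral_eq_sub_of_hasDerivAt (fun u _ => hg u) hint
  simpa using this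

/-- continuous version of Tsiatis's Lemma 10.4: pathwise, with
`X = min(T,C)`, `N_c(u) = I(X ≤ u, T > C)` (Stieltjes measure `I(T>C)·δ_X`),
`Y(u) = I(X ≥ u)`, `S_c(u) = exp(−∫_0^u λ_c)`, and
`M_c(u) = N_c(u) − ∫_0^u Y λ_c`, one has
`∫_0^t dM_c(u)/S_c(u) = 1 − Y(t)/S_c(t) − N(t−)/S_c(X)` where `N(t−) = I(X < t, T ≤ C)`. -/
theorem tsiatis_lemma_continuous (T C : ℝ) (hT : 0 < T) (hC : 0 < C) (hTC : T ≠ C)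
    (lamc : ℝ → ℝ) (hcont : Continuous lamc) (hnn : ∀ u, 0 ≤ lamc u)
    (Sc : ℝ → ℝ) (hSc : ∀ u, Sc u = Real.exp (-∫ v in (0:ℝ)..u, lamc v))
    (t : ℝ) (ht : 0 < t) :
    ((∫ u in Set.Ioo (0:ℝ) t, (Sc u)⁻¹
        ∂((if C < T then (1 : ℝ≥0∞) else 0) • Measure.dirac (min T C)))
      - ∫ u in (0:ℝ)..t, (if u ≤ min T C then (1:ℝ) else 0) * lamc u / Sc u) =
      1 - (if t ≤ min T C then (1:ℝ) else 0) / Sc t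
        - (if min T C < t ∧ T ≤ C then (1:ℝ) else 0) / Sc (min T C) := by
  set X := min T C with hXdef
  have hX : 0 < X := lt_min hT hC
  set F : ℝ → ℝ := fun u => ∫ v in (0:ℝ)..u, lamc v with hFdef
  have hScinv : ∀ u, (Sc u)⁻¹ = Real.exp (F u) := by
    intro u; rw [hSc u, Real.exp_neg, inv_inv]
  have hdiv : ∀ a u, a / Sc u = a * Real.exp (F u) := by
    intro a u; rw [div_eq_mul_inv, hScinv]
  -- the dirac part
  have hdirac : (∫ u in Set.Ioo (0:ℝ) t, (Sc u)⁻¹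
        ∂((if C < T then (1 : ℝ≥0∞) else 0) • Measure.dirac X))
      = (if C < T then (1:ℝ) else 0) *
          (if X ∈ Set.Ioo (0:ℝ) t then Real.exp (F X) else 0) := by
    rw [Measure.restrict_smul, MeasureTheory.integral_smul_measure,
      MeasureTheory.setIntegral_dirac (fun u => (Sc u)⁻¹) X (Set.Ioo (0:ℝ) t)]
    by_cases hCT : C < T <;> by_cases hmem : X ∈ Set.Ioo (0:ℝ) t <;>
      simp [hCT, hmem, hScinv]
  rw [hdirac]
  -- integrand equality
  have hfun : ∀ u, (if u ≤ X then (1:ℝ) else 0) * lamc u / Sc u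
      = (if u ≤ X then (1:ℝ) else 0) * (lamc u * Real.exp (F u)) := by
    intro u; rw [hdiv]; ring
  by_cases hXt : t ≤ X
  · -- X ≥ t : no jump yet
    have hmem : X ∉ Set.Ioo (0:ℝ) t := fun h => absurd h.2 (not_lt.2 hXt)
    simp only [hmem, if_false, mul_zero]
    have hint : (∫ u in (0:ℝ)..t, (if u ≤ X then (1:ℝ) else 0) * lamc u / Sc u)
        = ∫ u in (0:ℝ)..t, lamc u * Real.exp (F u) := by
      apply intervalIntegral.integral_congr
      intro u hu
      rw [Set.uIcc_of_le ht.le] at hu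
      have h' : u ≤ X := le_trans hu.2 hXt
      simp only [hfun u, if_pos h', one_mul, hdiv]
    rw [hint, tsiatis_aux lamc hcont t]
    have hN : ¬ (X < t ∧ T ≤ C) := fun h => absurd h.1 (not_lt.2 hXt)
    rw [if_pos hXt, if_neg hN, hdiv, hdiv, one_mul, zero_mul]
    ring
  · -- X < t : jump has occurred
    push_neg at hXt
    have hmem : X ∈ Set.Ioo (0:ℝ) t := ⟨hX, hXt⟩
    simp only [hmem, if_true]
    -- split the integral at X
    have hScc : Continuous Sc := by
      have : Sc = fun u => Real.exp (-F u) := funext hSc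
      rw [this]
      exact Real.continuous_exp.comp (by
        have hFc : Continuous F := continuous_iff_continuousAt.2
          fun u => (intervalIntegral.integral_hasDerivAt_right
            (hcont.intervalIntegrable _ _) (hcont.stronglyMeasurableAtFilter _ _)
            hcont.continuousAt).continuousAt
        exact hFc.neg)
    have hScpos : ∀ u, 0 < Sc u := by intro u; rw [hSc]; exact Real.exp_pos _
    have hgint : ∀ a b : ℝ, IntervalIntegrable
        (fun u => (if u ≤ X then (1:ℝ) else 0) * lamc u / Sc u) volume a b := by
      intro a b
      have heq : (fun u => (if u ≤ X then (1:ℝ) else 0) * lamc u / Sc u)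
          = Set.indicator (Set.Iic X) (fun u => lamc u / Sc u) := by
        funext u
        by_cases hu : u ≤ X
        · rw [if_pos hu, Set.indicator_of_mem (Set.mem_Iic.2 hu), one_mul]
        · rw [if_neg hu, Set.indicator_of_notMem (fun h => hu (Set.mem_Iic.1 h)),
            zero_mul, zero_div]
      rw [heq, intervalIntegrable_iff]
      exact (intervalIntegrable_iff.1
        (((hcont.div hScc (fun u => (hScpos u).ne'))).intervalIntegrable a b)).indicator
        measurableSet_Iic
    have hsplit : (∫ u in (0:ℝ)..t, (if u ≤ X then (1:ℝ) else 0) * lamc u / Sc u)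
        = (∫ u in (0:ℝ)..X, (if u ≤ X then (1:ℝ) else 0) * lamc u / Sc u)
          + ∫ u in X..t, (if u ≤ X then (1:ℝ) else 0) * lamc u / Sc u := by
      rw [intervalIntegral.integral_add_adjacent_intervals (hgint 0 X) (hgint X t)]
    have h1 : (∫ u in (0:ℝ)..X, (if u ≤ X then (1:ℝ) else 0) * lamc u / Sc u)
        = Real.exp (F X) - 1 := by
      have : (∫ u in (0:ℝ)..X, (if u ≤ X then (1:ℝ) else 0) * lamc u / Sc u)
          = ∫ u in (0:ℝ)..X, lamc u * Real.exp (F u) := by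
        apply intervalIntegral.integral_congr
        intro u hu
        rw [Set.uIcc_of_le hX.le] at hu
        simp only [hfun u, if_pos hu.2, one_mul, hdiv]
      rw [this]; exact tsiatis_aux lamc hcont X
    have h2 : (∫ u in X..t, (if u ≤ X then (1:ℝ) else 0) * lamc u / Sc u) = 0 := by
      have : (∫ u in X..t, (if u ≤ X then (1:ℝ) else 0) * lamc u / Sc u)
          = ∫ u in X..t, (0:ℝ) := by
        apply intervalIntegral.integral_congr_ae
        refine Filter.Eventually.of_forall fun u hu => ?_
        rw [Set.uIoc_of_le hXt.le] at hu
        simp only [if_neg (not_le.2 hu.1), zero_mul, zero_div]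
      rw [this, intervalIntegral.integral_zero]
    rw [hsplit, h1, h2, add_zero]
    have hnt : ¬ t ≤ X := not_le.2 hXt
    rw [if_neg hnt, zero_div]
    rcases lt_or_gt_of_ne hTC with hlt | hgt
    · -- T < C, so T ≤ C, ¬ C < T
      have hCT : ¬ C < T := not_lt.2 hlt.le
      rw [if_neg hCT, if_pos ⟨hXt, hlt.le⟩, hdiv, one_mul]
      ring
    · -- C < T
      have hTle : ¬ (X < t ∧ T ≤ C) := fun h => absurd h.2 (not_le.2 hgt)
      rw [if_pos hgt, if_neg hTle, zero_div, one_mul]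
      ring
end

section
/- Pathwise decomposition identity: with M_T(t) = N_T(t) − ∫_0^t Y_T(u)e^{βA}λ_0(u)du and the IPCW increment dM^w(t) = S_c(t|A,Z)^{-1}{dN(t) − Y(t)e^{βA}λ_0(t)dt}, and M_c(u) the censoring martingale M_c(u) = N_c(u) − ∫_0^u Y(v)λ_c(v|A,Z)dv with S_c(u|A,Z)=exp(−∫_0^u λ_c(v|A,Z)dv), one has for every sample point and every t: M^w(t) = M_T(min(t, X⁺)) − ∫_0^t (∫_0^s S_c(u|A,Z)^{-1} dM_c(u)) dM_T(s), i.e., dM^w(t) = dM_T(t) − dM_T(t)·∫_0^t S_c(u|A,Z)^{-1} dM_c(u). -/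
open scoped Classical
open intervalIntegral

lemma ipcw_aux_ftc (lamc : ℝ → ℝ) (hlamc : Continuous lamc)
    (Sc : ℝ → ℝ) (hSc : ∀ u, Sc u = Real.exp (-∫ v in (0:ℝ)..u, lamc v))
    (c : ℝ) (hc : 0 ≤ c) :
    ∫ u in (0:ℝ)..c, lamc u / Sc u = (Sc c)⁻¹ - 1 := by
  have hSinv : ∀ u, (Sc u)⁻¹ = Real.exp (∫ v in (0:ℝ)..u, lamc v) := by
    intro u; rw [hSc, ← Real.exp_neg, neg_neg]
  set g : ℝ → ℝ := fun x => Real.exp (∫ v in (0:ℝ)..x, lamc v) with hg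
  have hprim : Continuous fun x => ∫ v in (0:ℝ)..x, lamc v :=
    intervalIntegral.continuous_primitive (fun a b => hlamc.intervalIntegrable a b) 0
  have hgc : Continuous g := Real.continuous_exp.comp hprim
  have hderiv : ∀ u, HasDerivAt g (lamc u * g u) u := by
    intro u
    have h1 : HasDerivAt (fun x => ∫ v in (0:ℝ)..x, lamc v) (lamc u) u :=
      intervalIntegral.integral_hasDerivAt_right (hlamc.intervalIntegrable 0 u)
        (hlamc.stronglyMeasurableAtFilter _ _) hlamc.continuousAt
    simpa [mul_comm] using h1.exp
  have hint : IntervalIntegrable (fun u => lamc u * g u) MeasureTheory.volume 0 c :=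
    (hlamc.mul hgc).intervalIntegrable 0 c
  have := intervalIntegral.integral_eq_sub_of_hasDerivAt
    (f := g) (f' := fun u => lamc u * g u) (a := (0:ℝ)) (b := c)
    (fun u _ => hderiv u) hint
  have hcong : ∀ u, lamc u / Sc u = lamc u * g u := by
    intro u; rw [div_eq_mul_inv, hSinv]
  simp only [hcong]
  rw [this, hSinv]
  simp [g]

lemma ipcw_aux_int (lamc : ℝ → ℝ) (hlamc : Continuous lamc)
    (Sc : ℝ → ℝ) (hSc : ∀ u, Sc u = Real.exp (-∫ v in (0:ℝ)..u, lamc v))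
    (m t : ℝ) (hm : 0 ≤ m) (ht : 0 ≤ t) :
    ∫ u in (0:ℝ)..t, (if u ≤ m then (1:ℝ) else 0) * lamc u / Sc u
      = (Sc (min t m))⁻¹ - 1 := by
  have hrw : ∀ u, (if u ≤ m then (1:ℝ) else 0) * lamc u / Sc u
      = Set.indicator {x | x ≤ m} (fun u => lamc u / Sc u) u := by
    intro u
    by_cases h : u ≤ m <;> simp [Set.indicator_apply, Set.mem_setOf_eq, h]
  simp only [hrw]
  rcases le_total t m with h | h
  · rw [min_eq_left h, ← ipcw_aux_ftc lamc hlamc Sc hSc t ht]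
    apply intervalIntegral.integral_congr
    intro u hu
    rw [Set.uIcc_of_le ht] at hu
    have : u ≤ m := le_trans hu.2 h
    simp [Set.indicator_apply, Set.mem_setOf_eq, this]
  · rw [min_eq_right h,
      intervalIntegral.integral_indicator (Set.mem_Icc.2 ⟨hm, h⟩),
      ipcw_aux_ftc lamc hlamc Sc hSc m hm]

/-- pathwise decomposition `dM^w(t) = dM_T(t) − dM_T(t)·∫_0^t S_c⁻¹ dM_c`.
Since `dM_T` consists of a unit jump at `T` plus the density `−Y_T(t)e^{βA}λ_0(t)`, the
identity is expressed via its atom part (at `t = T`) and its density part: with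
`K(t) = ∫_0^t S_c(u)⁻¹ dM_c(u) = I(X < t, T > C)/S_c(X) − ∫_0^t Y(u)λ_c(u)/S_c(u) du`,
(atom)    `I(T ≤ C)/S_c(T) = 1·(1 − K(T))`, and
(density) `Y(t)e^{βA}λ_0(t)/S_c(t) = Y_T(t)e^{βA}λ_0(t)·(1 − K(t))` for all `t ≥ 0`. -/
theorem ipcw_martingale_decomposition (T C A : ℝ) (hT : 0 < T) (hC : 0 < C) (hTC : T ≠ C)
    (β : ℝ) (lam0 lamc : ℝ → ℝ)
    (hlam0 : Continuous lam0) (hlam0nn : ∀ u, 0 ≤ lam0 u)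
    (hlamc : Continuous lamc) (hlamcnn : ∀ u, 0 ≤ lamc u)
    (Sc : ℝ → ℝ) (hSc : ∀ u, Sc u = Real.exp (-∫ v in (0:ℝ)..u, lamc v))
    (K : ℝ → ℝ)
    (hK : ∀ t, K t = (if min T C < t ∧ C < T then (Sc (min T C))⁻¹ else 0)
      - ∫ u in (0:ℝ)..t, (if u ≤ min T C then (1:ℝ) else 0) * lamc u / Sc u) :
    ((if T ≤ C then (1:ℝ) else 0) / Sc T = 1 - K T) ∧
    (∀ t : ℝ, 0 ≤ t →
      (if t ≤ min T C then (1:ℝ) else 0) * Real.exp (β * A) * lam0 t / Sc t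
        = (if t ≤ T then (1:ℝ) else 0) * Real.exp (β * A) * lam0 t * (1 - K t)) := by
  have hm : (0:ℝ) ≤ min T C := le_min hT.le hC.le
  have hKval : ∀ t, 0 ≤ t → K t =
      (if min T C < t ∧ C < T then (Sc (min T C))⁻¹ else 0)
      - ((Sc (min t (min T C)))⁻¹ - 1) := by
    intro t ht
    rw [hK t, ipcw_aux_int lamc hlamc Sc hSc (min T C) t hm ht]
  constructor
  · rcases le_or_gt T C with hle | hlt
    · have hmin : min T C = T := min_eq_left hle
      have hKT : K T = 1 - (Sc T)⁻¹ := by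
        rw [hKval T hT.le, hmin, if_neg (by simp), min_self]; ring
      rw [hKT, if_pos hle, div_eq_mul_inv, one_mul]; ring
    · have hmin : min T C = C := min_eq_right hlt.le
      have hKT : K T = 1 := by
        rw [hKval T hT.le, hmin, if_pos ⟨hlt, hlt⟩, min_eq_right hlt.le]; ring
      rw [hKT, if_neg (not_le.mpr hlt)]; simp
  · intro t ht
    by_cases h1 : t ≤ min T C
    · have hKt : K t = 1 - (Sc t)⁻¹ := by
        rw [hKval t ht, if_neg (by rintro ⟨h, -⟩; exact absurd h1 (not_le.mpr h)),
          min_eq_left h1]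
        ring
      have htT : t ≤ T := le_trans h1 (min_le_left _ _)
      rw [hKt, if_pos h1, if_pos htT, div_eq_mul_inv]; ring
    · rw [if_neg h1, zero_mul, zero_mul, zero_div]
      by_cases h2 : t ≤ T
      · have hmt : min T C < t := not_le.mp h1
        have hlt : C < T := by
          have hmT : min T C < T := lt_of_lt_of_le hmt h2
          rcases min_lt_iff.mp hmT with h | h
          · exact absurd h (lt_irrefl T)
          · exact h
        have hCt : C < t := by rwa [min_eq_right hlt.le] at hmt
        have hmin : min T C = C := min_eq_right hlt.le
        have hKt : K t = 1 := by
          rw [hKval t ht, hmin, if_pos ⟨hCt, hlt⟩, min_eq_right hCt.le]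
          ring
        rw [hKt]; ring
      · rw [if_neg h2]; ring
end
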